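/- Let f : [0,1] → ℝ be Lipschitz continuous. Then for all n > m ≥ 2, the difference of the averages of f over B_n and B_m satisfies |(1/ℓ(B_n))∫_{B_n} f dx − (1/ℓ(B_m))∫_{B_m} f dx| ≤ 2K/3^{m−1}, where K is a Lipschitz constant of f. In particular the sequence of averages (1/ℓ(B_n))∫_{B_n} f dx is Cauchy. -/

import Mathlib

open MeasureTheory Set Real Filter

noncomputable def cantorStage : ℕ → Set ℝ
  | 0 => Set.Icc 0 1
  | (m+1) => (fun x => x / 3) '' cantorStage m ∪ (fun x => (x + 2) / 3) '' cantorStage m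

noncomputable def Bset (m : ℕ) : Set ℝ := cantorStage (m - 1) \ cantorStage m

noncomputable def psi (A : ℕ → ℝ) (n : ℕ) (x : ℝ) : ℝ :=
  -∑ k ∈ Finset.Icc 1 n, A k * (Bset k).indicator (fun _ => (1:ℝ)) x

noncomputable def hc : ℝ := Real.log (3/2)

noncomputable def psiα (α : ℝ) : ℕ → ℝ → ℝ := psi (fun k => α * k)

noncomputable def Zf (α β : ℝ) (n : ℕ) : ℝ :=
  ∫ x in Set.Icc (0:ℝ) 1, Real.exp (-β * psiα α n x)

noncomputable def gibbs (α β : ℝ) (n : ℕ) (A : Set ℝ) : ℝ :=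
  (∫ x in A ∩ Set.Icc (0:ℝ) 1, Real.exp (-β * psiα α n x)) / Zf α β n

/-!
For `k ≥ 1`, `Bset (k + 1)` is the disjoint union of the images of `Bset k` under the two
similarities `x ↦ x / 3` and `x ↦ (x + 2) / 3`, and `ℓ(Bset (k + 1)) = (2/3) ℓ(Bset k)`. Hence the
average of `f` over `Bset (k + 1)` is the mean of the averages over `Bset k` of the two
compositions of `f` with these maps, which are `K/3`-Lipschitz. Each average of `f` lies within
`K` of `f 0`, giving the bound `2K` for `m = 1`, and induction on `m` gains a factor `1/3` per step.
-/

open scoped NNReal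

noncomputable def cantorMap (c x : ℝ) : ℝ := (x + c) / 3

lemma cantorMap_injective (c : ℝ) : Function.Injective (cantorMap c) := by
  intro x y h
  simp only [cantorMap] at h
  linarith

lemma continuous_cantorMap (c : ℝ) : Continuous (cantorMap c) := by
  unfold cantorMap; fun_prop

lemma hasDerivAt_cantorMap (c x : ℝ) : HasDerivAt (cantorMap c) 3⁻¹ x := by
  unfold cantorMap
  simpa using ((hasDerivAt_id x).add_const c).div_const 3

lemma lipschitzWith_cantorMap (c : ℝ) : LipschitzWith 3⁻¹ (cantorMap c) := by
  refine LipschitzWith.of_dist_le_mul fun x y => le_of_eq ?_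
  rw [Real.dist_eq, Real.dist_eq, cantorMap, cantorMap, ← sub_div, add_sub_add_right_eq_sub,
    abs_div, abs_of_pos (three_pos : (0 : ℝ) < 3), NNReal.coe_inv]
  push_cast
  ring

lemma mapsTo_cantorMap {c : ℝ} (hc : c ∈ Icc (0 : ℝ) 2) :
    MapsTo (cantorMap c) (Icc 0 1) (Icc 0 1) := fun x hx => by
  simp only [cantorMap, mem_Icc] at hx hc ⊢
  constructor <;> linarith [hx.1, hx.2, hc.1, hc.2]

lemma LipschitzOnWith.comp_cantorMap {f : ℝ → ℝ} {K : ℝ≥0} (hf : LipschitzOnWith K f (Icc 0 1))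
    {c : ℝ} (hc : c ∈ Icc (0 : ℝ) 2) : LipschitzOnWith (K * 3⁻¹) (f ∘ cantorMap c) (Icc 0 1) :=
  hf.comp (lipschitzWith_cantorMap c).lipschitzOnWith (mapsTo_cantorMap hc)

lemma disjoint_image_cantorMap {s t : Set ℝ} (hs : s ⊆ Icc 0 1) (ht : t ⊆ Icc 0 1) :
    Disjoint (cantorMap 0 '' s) (cantorMap 2 '' t) := by
  refine disjoint_left.2 ?_
  rintro _ ⟨x, hx, rfl⟩ ⟨y, hy, hxy⟩
  simp only [cantorMap] at hxy
  linarith [(hs hx).2, (ht hy).1]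

lemma MeasurableSet.image_cantorMap {s : Set ℝ} (hs : MeasurableSet s) (c : ℝ) :
    MeasurableSet (cantorMap c '' s) :=
  hs.image_of_continuousOn_injOn (continuous_cantorMap c).continuousOn
    (cantorMap_injective c).injOn

lemma setIntegral_image_cantorMap {s : Set ℝ} (hs : MeasurableSet s) (c : ℝ) (f : ℝ → ℝ) :
    ∫ x in cantorMap c '' s, f x = 3⁻¹ * ∫ x in s, f (cantorMap c x) := by
  rw [integral_image_eq_integral_abs_deriv_smul hs
    (fun x _ => (hasDerivAt_cantorMap c x).hasDerivWithinAt) (cantorMap_injective c).injOn f,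
    ← integral_const_mul]
  norm_num

lemma measureReal_image_cantorMap {s : Set ℝ} (hs : MeasurableSet s) (c : ℝ) :
    volume.real (cantorMap c '' s) = 3⁻¹ * volume.real s := by
  simpa using setIntegral_image_cantorMap hs c (fun _ => 1)

lemma cantorStage_succ (m : ℕ) :
    cantorStage (m + 1) = cantorMap 0 '' cantorStage m ∪ cantorMap 2 '' cantorStage m := by
  have h0 : cantorMap 0 = fun x => x / 3 := funext fun x => by simp [cantorMap]
  rw [h0]
  rfl

lemma cantorStage_subset_Icc (m : ℕ) : cantorStage m ⊆ Icc 0 1 := by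
  induction m with
  | zero => exact subset_rfl
  | succ m ih =>
    rw [cantorStage_succ]
    exact union_subset ((image_mono ih).trans (mapsTo_cantorMap (by norm_num)).image_subset)
      ((image_mono ih).trans (mapsTo_cantorMap (by norm_num)).image_subset)

lemma cantorStage_succ_subset (m : ℕ) : cantorStage (m + 1) ⊆ cantorStage m := by
  induction m with
  | zero =>
    rw [cantorStage_succ]
    exact union_subset (mapsTo_cantorMap (by norm_num)).image_subset
      (mapsTo_cantorMap (by norm_num)).image_subset
  | succ m ih =>
    rw [cantorStage_succ (m + 1)]
    conv_rhs => rw [cantorStage_succ m]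
    exact union_subset_union (image_mono ih) (image_mono ih)

lemma isCompact_cantorStage (m : ℕ) : IsCompact (cantorStage m) := by
  induction m with
  | zero => exact isCompact_Icc
  | succ m ih =>
    rw [cantorStage_succ]
    exact (ih.image (continuous_cantorMap 0)).union (ih.image (continuous_cantorMap 2))

lemma measurableSet_cantorStage (m : ℕ) : MeasurableSet (cantorStage m) :=
  (isCompact_cantorStage m).measurableSet

lemma volume_image_cantorStage_ne_top (c : ℝ) (m : ℕ) :
    volume (cantorMap c '' cantorStage m) ≠ ⊤ :=
  ((isCompact_cantorStage m).image (continuous_cantorMap c)).measure_lt_top.ne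

lemma measureReal_cantorStage (m : ℕ) : volume.real (cantorStage m) = (2 / 3) ^ m := by
  induction m with
  | zero => simp [cantorStage]
  | succ m ih =>
    have hC := measurableSet_cantorStage m
    rw [cantorStage_succ, measureReal_union
      (disjoint_image_cantorMap (cantorStage_subset_Icc m) (cantorStage_subset_Icc m))
      (hC.image_cantorMap 2) (volume_image_cantorStage_ne_top 0 m)
      (volume_image_cantorStage_ne_top 2 m), measureReal_image_cantorMap hC,
      measureReal_image_cantorMap hC, ih, pow_succ]
    ring

lemma Bset_subset_Icc (n : ℕ) : Bset n ⊆ Icc 0 1 :=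
  sdiff_subset.trans (cantorStage_subset_Icc _)

lemma measurableSet_Bset (n : ℕ) : MeasurableSet (Bset n) :=
  (measurableSet_cantorStage _).diff (measurableSet_cantorStage _)

lemma volume_Bset_lt_top (n : ℕ) : volume (Bset n) < ⊤ :=
  (measure_mono (Bset_subset_Icc n)).trans_lt (by simp)

lemma measureReal_Bset {n : ℕ} (hn : 1 ≤ n) : volume.real (Bset n) = 1 / 2 * (2 / 3) ^ n := by
  obtain ⟨m, rfl⟩ := Nat.exists_eq_add_of_le' hn
  rw [Bset, Nat.add_sub_cancel, measureReal_sdiff (cantorStage_succ_subset m)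
    (measurableSet_cantorStage _) (isCompact_cantorStage m).measure_lt_top.ne,
    measureReal_cantorStage, measureReal_cantorStage, pow_succ]
  ring

lemma union_image_cantorMap_sdiff {s t : Set ℝ} (hts : t ⊆ s) (hs : s ⊆ Icc 0 1) :
    (cantorMap 0 '' s ∪ cantorMap 2 '' s) \ (cantorMap 0 '' t ∪ cantorMap 2 '' t) =
      cantorMap 0 '' (s \ t) ∪ cantorMap 2 '' (s \ t) := by
  have ht := hts.trans hs
  rw [image_sdiff (cantorMap_injective 0), image_sdiff (cantorMap_injective 2)]
  have h02 := disjoint_image_cantorMap hs ht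
  have h20 := (disjoint_image_cantorMap ht hs).symm
  ext x
  simp only [mem_union, Set.mem_sdiff]
  constructor
  · tauto
  · rintro (⟨h, h'⟩ | ⟨h, h'⟩)
    · exact ⟨Or.inl h, fun h'' => h''.elim h' (disjoint_left.1 h02 h)⟩
    · exact ⟨Or.inr h, fun h'' => h''.elim (disjoint_left.1 h20 h) h'⟩

lemma Bset_succ {k : ℕ} (hk : 1 ≤ k) :
    Bset (k + 1) = cantorMap 0 '' Bset k ∪ cantorMap 2 '' Bset k := by
  obtain ⟨j, rfl⟩ := Nat.exists_eq_add_of_le' hk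
  rw [Bset, Bset, Nat.add_sub_cancel, Nat.add_sub_cancel, cantorStage_succ (j + 1),
    ← union_image_cantorMap_sdiff (cantorStage_succ_subset j) (cantorStage_subset_Icc j),
    ← cantorStage_succ j]

/-- Normalised by the paper's `ℓ(Bset n) = (1/2) (2/3)^n`, which is the measure of `Bset n` only
for `n ≥ 1` (`Bset 0 = ∅`). -/
noncomputable def cantorAvg (f : ℝ → ℝ) (n : ℕ) : ℝ :=
  (∫ x in Bset n, f x) / ((1/2 : ℝ) * (2/3 : ℝ) ^ n)

lemma setIntegral_Bset_succ {f : ℝ → ℝ} (hf : IntegrableOn f (Icc 0 1)) {k : ℕ} (hk : 1 ≤ k) :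
    ∫ x in Bset (k + 1), f x =
      3⁻¹ * (∫ x in Bset k, f (cantorMap 0 x)) + 3⁻¹ * ∫ x in Bset k, f (cantorMap 2 x) := by
  have hB := measurableSet_Bset k
  have hint : ∀ c ∈ Icc (0 : ℝ) 2, IntegrableOn f (cantorMap c '' Bset k) := fun c hc =>
    hf.mono_set (((mapsTo_cantorMap hc).mono_left (Bset_subset_Icc k)).image_subset)
  rw [Bset_succ hk, setIntegral_union (disjoint_image_cantorMap (Bset_subset_Icc k)
    (Bset_subset_Icc k)) (hB.image_cantorMap 2) (hint 0 (by norm_num)) (hint 2 (by norm_num)),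
    setIntegral_image_cantorMap hB, setIntegral_image_cantorMap hB]

lemma cantorAvg_succ {f : ℝ → ℝ} (hf : IntegrableOn f (Icc 0 1)) {k : ℕ} (hk : 1 ≤ k) :
    cantorAvg f (k + 1) = (cantorAvg (f ∘ cantorMap 0) k + cantorAvg (f ∘ cantorMap 2) k) / 2 := by
  rw [cantorAvg, cantorAvg, cantorAvg, setIntegral_Bset_succ hf hk, pow_succ]
  field_simp
  rfl

lemma abs_cantorAvg_sub_le {f : ℝ → ℝ} {K : ℝ≥0} (hf : LipschitzOnWith K f (Icc 0 1)) {n : ℕ}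
    (hn : 1 ≤ n) : |cantorAvg f n - f 0| ≤ K := by
  have hℓ : (0 : ℝ) < 1 / 2 * (2 / 3) ^ n := by positivity
  have hint :
      ∫ x in Bset n, (f x - f 0) = (∫ x in Bset n, f x) - (1 / 2 * (2 / 3) ^ n) * f 0 := by
    rw [integral_sub ((hf.continuousOn.integrableOn_Icc).mono_set (Bset_subset_Icc n))
      (integrableOn_const (volume_Bset_lt_top n).ne), setIntegral_const, measureReal_Bset hn,
      smul_eq_mul]
  have hbound : |∫ x in Bset n, (f x - f 0)| ≤ K * (1 / 2 * (2 / 3) ^ n) := by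
    rw [← measureReal_Bset hn, ← Real.norm_eq_abs]
    refine norm_setIntegral_le_of_norm_le_const (volume_Bset_lt_top n) fun x hx => ?_
    have hx01 := Bset_subset_Icc n hx
    calc ‖f x - f 0‖ = dist (f x) (f 0) := rfl
      _ ≤ K * dist x 0 := hf.dist_le_mul x hx01 0 (by simp)
      _ ≤ K * 1 := by
        gcongr
        rw [Real.dist_0_eq_abs, abs_of_nonneg hx01.1]
        exact hx01.2
      _ = K := mul_one _
  have hsub : cantorAvg f n - f 0 = (∫ x in Bset n, (f x - f 0)) / (1 / 2 * (2 / 3) ^ n) := by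
    rw [hint, cantorAvg]
    field_simp
  rw [hsub, abs_div, abs_of_pos hℓ, div_le_iff₀ hℓ]
  exact hbound

lemma abs_cantorAvg_sub_cantorAvg_le {m n : ℕ} (hm : 1 ≤ m) (hmn : m ≤ n) {f : ℝ → ℝ} {K : ℝ≥0}
    (hf : LipschitzOnWith K f (Icc 0 1)) :
    |cantorAvg f n - cantorAvg f m| ≤ 2 * K / 3 ^ (m - 1) := by
  induction m, hm using Nat.le_induction generalizing n f K with
  | base =>
    calc |cantorAvg f n - cantorAvg f 1|
        ≤ |cantorAvg f n - f 0| + |cantorAvg f 1 - f 0| := by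
          simpa only [abs_sub_comm (f 0)] using abs_sub_le (cantorAvg f n) (f 0) (cantorAvg f 1)
      _ ≤ K + K := add_le_add (abs_cantorAvg_sub_le hf hmn) (abs_cantorAvg_sub_le hf le_rfl)
      _ = 2 * K / 3 ^ (1 - 1) := by ring
  | succ m hm ih =>
    obtain ⟨n, rfl⟩ := Nat.exists_eq_add_of_le' (hm.trans (Nat.le_succ m |>.trans hmn))
    have hint : IntegrableOn f (Icc 0 1) := hf.continuousOn.integrableOn_Icc
    have h0 := ih (n := n) (by omega) (hf.comp_cantorMap (c := 0) (by norm_num))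
    have h2 := ih (n := n) (by omega) (hf.comp_cantorMap (c := 2) (by norm_num))
    rw [cantorAvg_succ hint (by omega), cantorAvg_succ hint hm]
    calc _ = |(cantorAvg (f ∘ cantorMap 0) n - cantorAvg (f ∘ cantorMap 0) m) +
            (cantorAvg (f ∘ cantorMap 2) n - cantorAvg (f ∘ cantorMap 2) m)| / 2 := by
          rw [← abs_of_pos (two_pos : (0 : ℝ) < 2), ← abs_div]
          ring_nf
      _ ≤ (2 * ↑(K * 3⁻¹) / 3 ^ (m - 1) + 2 * ↑(K * 3⁻¹) / 3 ^ (m - 1)) / 2 := by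
          gcongr
          exact (abs_add_le _ _).trans (add_le_add h0 h2)
      _ = 2 * K / 3 ^ (m + 1 - 1) := by
          rw [Nat.add_sub_cancel, ← Nat.sub_add_cancel hm, pow_succ]
          push_cast
          ring

lemma cauchySeq_cantorAvg {f : ℝ → ℝ} {K : ℝ≥0} (hf : LipschitzOnWith K f (Icc 0 1)) :
    CauchySeq (cantorAvg f) := by
  rw [← cauchySeq_shift 1]
  refine cauchySeq_of_le_tendsto_0' (fun n => 2 * K / 3 ^ n) (fun n m hnm => ?_) ?_
  · rw [Real.dist_eq, abs_sub_comm]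
    simpa using abs_cantorAvg_sub_cantorAvg_le (by omega) (by omega : n + 1 ≤ m + 1) hf
  · simpa [div_eq_mul_inv] using (tendsto_pow_atTop_nhds_zero_of_lt_one
      (by norm_num : (0 : ℝ) ≤ 3⁻¹) (by norm_num)).const_mul (2 * (K : ℝ))

theorem stmt12 (f : ℝ → ℝ) (K : NNReal) (hf : LipschitzOnWith K f (Set.Icc 0 1)) :
    let avg : ℕ → ℝ := fun n => (∫ x in Bset n, f x) / ((1/2 : ℝ) * (2/3 : ℝ) ^ n)
    (∀ m n : ℕ, 2 ≤ m → m < n →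
      |avg n - avg m| ≤ 2 * (K : ℝ) / (3 : ℝ) ^ (m - 1)) ∧
    CauchySeq avg :=
  ⟨fun _ _ hm hmn => abs_cantorAvg_sub_cantorAvg_le (by omega) hmn.le hf, cauchySeq_cantorAvg hf⟩
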